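/- There exists a constant C such that for all k₁, k₂, k₃, j₁, j₂, j₃ ∈ ℕ and all nonnegative f₁, f₂, f₃ ∈ L²(ℤ² × ℝ) with supp(f_i) ⊆ D^x_{k_i, ≤ j_i} for i = 1, 2, 3: ∫_{ℤ² × ℝ} (f₁ * f₂) f₃ ≤ C ‖f₁‖_{L²} 2^{j₂/2} 2^{k₂/2} ‖f₂‖_{L²} (1 + 2^{(j₃ − k₁)/4}) ‖f₃‖_{L²}. -/

import Mathlib

open MeasureTheory
open scoped ENNReal

/-- Counting measure on `ℤ²` times Lebesgue measure on `ℝ`. -/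
noncomputable def muZ : Measure ((ℤ × ℤ) × ℝ) :=
  (Measure.count : Measure (ℤ × ℤ)).prod (volume : Measure ℝ)

/-- Convolution on `ℤ² × ℝ` of nonnegative functions, valued in `ℝ≥0∞`:
`(f * g)(ζ, τ) = ∑_{ζ'} ∫ f(ζ', τ') g(ζ - ζ', τ - τ') dτ'`. -/
noncomputable def convZ (f g : (ℤ × ℤ) × ℝ → ℝ) (p : (ℤ × ℤ) × ℝ) : ℝ≥0∞ :=
  ∑' ζ : ℤ × ℤ, ∫⁻ τ : ℝ,
    ENNReal.ofReal (f (ζ, τ)) * ENNReal.ofReal (g (p.1 - ζ, p.2 - τ))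

/-- The Zakharov-Kuznetsov dispersion relation `ω(ξ,η) = ξ³ + ξη²` on `ℤ²`. -/
def omegaZK (ζ : ℤ × ℤ) : ℝ := ((ζ.1 : ℝ)) ^ 3 + (ζ.1 : ℝ) * ((ζ.2 : ℝ)) ^ 2

/-- The anisotropic frequency-modulation region
`D^x_{k,≤j} = {(ξ,η,τ) : 2^{k-1} ≤ |ξ| < 2^k, |τ - ω(ξ,η)| ≤ 2^j}`. -/
def Dx (k j : ℕ) : Set ((ℤ × ℤ) × ℝ) :=
  {p | (2:ℝ) ^ ((k : ℤ) - 1) ≤ |((p.1.1 : ℝ))| ∧ |((p.1.1 : ℝ))| < (2:ℝ) ^ (k : ℤ) ∧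
    |p.2 - omegaZK p.1| ≤ (2:ℝ) ^ (j : ℤ)}

/-!
Write the trilinear form as `∫∫ f₁(q) f₂(p - q) f₃(p) dq dp` and apply Cauchy–Schwarz on
`ℤ² × ℝ` squared, splitting the integrand as `(f₂(p - q) f₃(p)) · (f₁(q) 1_K(p, q))`, where
`K = {(p, q) : p ∈ D_{k₃,≤j₃}, p - q ∈ D_{k₂,≤j₂}}`. The first factor has norm `‖f₂‖ ‖f₃‖`
by translation invariance, the second at most `‖f₁‖ sup_q |K_q|^{1/2}`, the supremum over `q` in
the support of `f₁`. A point `(ξ, η, τ)` of the fibre `K_q` has `|ξ - ξ_q| < 2^{k₂}`, `τ` in an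
interval of length `2 · 2^{min(j₂,j₃)}`, and `η` a near-root of the resonance function
`ω(ζ) - ω(ζ - q) - τ_q`, which is quadratic in `η` with leading coefficient `ξ_q`, so that at most
`2 (√(2 (2^{j₂} + 2^{j₃}) / |ξ_q|) + 1)` integers `η` qualify. Since `|ξ_q| ≥ 2^{k₁ - 1}`, this
gives `|K_q| ≲ 2^{j₂} 2^{k₂} (1 + 2^{(j₃ - k₁)/2})`.
-/

open Function

instance MeasureTheory.Measure.prod.instIsNegInvariant {G H : Type*} [MeasurableSpace G]
    [MeasurableSpace H] [Neg G] [Neg H] [MeasurableNeg G] [MeasurableNeg H] (μ : Measure G)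
    (ν : Measure H) [SFinite μ] [SFinite ν] [μ.IsNegInvariant] [ν.IsNegInvariant] :
    (μ.prod ν).IsNegInvariant where
  neg_eq_self := by
    rw [Measure.neg, show (Neg.neg : G × H → G × H) = Prod.map Neg.neg Neg.neg from rfl,
      ← Measure.map_prod_map μ ν measurable_neg measurable_neg]
    exact congrArg₂ Measure.prod (Measure.neg_eq_self (μ := μ)) (Measure.neg_eq_self (μ := ν))

theorem eLpNorm_two_eq_lintegral {α : Type*} [MeasurableSpace α] {μ : Measure α} {F : α → ℝ≥0∞} :
    eLpNorm F 2 μ = (∫⁻ x, F x ^ (2 : ℝ) ∂μ) ^ (1 / 2 : ℝ) := by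
  simp [eLpNorm_eq_lintegral_rpow_enorm_toReal two_ne_zero ENNReal.ofNat_ne_top]

theorem lintegral_prod_mul_indicator_rpow_two_le {α β : Type*} [MeasurableSpace α]
    [MeasurableSpace β] {μ : Measure α} {ν : Measure β} [SFinite μ] [SFinite ν] {F : β → ℝ≥0∞}
    (hF : AEMeasurable F ν) {K : Set (α × β)} (hK : MeasurableSet K) {M : ℝ≥0∞}
    (hM : ∀ y ∈ support F, μ {x | (x, y) ∈ K} ≤ M) :
    ∫⁻ z, (F z.2 * K.indicator 1 z) ^ (2 : ℝ) ∂(μ.prod ν) ≤ M * ∫⁻ y, F y ^ (2 : ℝ) ∂ν := by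
  have hmeas : AEMeasurable (fun z : α × β => (F z.2 * K.indicator 1 z) ^ (2 : ℝ)) (μ.prod ν) :=
    ((hF.comp_quasiMeasurePreserving Measure.quasiMeasurePreserving_snd).mul
      (measurable_one.indicator hK).aemeasurable).pow_const _
  rw [lintegral_prod_symm _ hmeas, ← lintegral_const_mul'' _ (hF.pow_const _)]
  refine lintegral_mono fun y => ?_
  have hslice : MeasurableSet {x | (x, y) ∈ K} := measurable_prodMk_right hK
  have hsq (x : α) : (F (x, y).2 * K.indicator 1 (x, y)) ^ (2 : ℝ) =
      F y ^ (2 : ℝ) * {x | (x, y) ∈ K}.indicator 1 x := by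
    change (F y * {x | (x, y) ∈ K}.indicator 1 x) ^ (2 : ℝ) = _
    by_cases hx : x ∈ {x | (x, y) ∈ K} <;> simp [hx]
  rw [lintegral_congr hsq, lintegral_const_mul _ (measurable_one.indicator hslice),
    lintegral_indicator_one hslice, mul_comm M]
  by_cases hy : F y = 0
  · simp [hy]
  · exact mul_le_mul_right (hM y hy) _

section Convolution

variable {G : Type*} [MeasurableSpace G] [AddGroup G] [MeasurableAdd₂ G] [MeasurableNeg G]
  {μ : Measure G} [SFinite μ] [μ.IsAddLeftInvariant] [μ.IsNegInvariant]

theorem lintegral_prod_sub_rpow_two {F₂ F₃ : G → ℝ≥0∞}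
    (hF₂ : AEMeasurable F₂ μ) (hF₃ : AEMeasurable F₃ μ) :
    ∫⁻ z, (F₂ (z.1 - z.2) * F₃ z.1) ^ (2 : ℝ) ∂(μ.prod μ) =
      (∫⁻ x, F₂ x ^ (2 : ℝ) ∂μ) * ∫⁻ x, F₃ x ^ (2 : ℝ) ∂μ := by
  have hmeas : AEMeasurable (fun z : G × G => (F₂ (z.1 - z.2) * F₃ z.1) ^ (2 : ℝ)) (μ.prod μ) :=
    ((hF₂.comp_quasiMeasurePreserving (quasiMeasurePreserving_sub μ μ)).mul
      (hF₃.comp_quasiMeasurePreserving Measure.quasiMeasurePreserving_fst)).pow_const _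
  rw [lintegral_prod _ hmeas, ← lintegral_const_mul'' _ (hF₃.pow_const _)]
  refine lintegral_congr fun p => ?_
  simp_rw [ENNReal.mul_rpow_of_nonneg _ _ zero_le_two]
  have hp : AEMeasurable (fun q => F₂ (p - q) ^ (2 : ℝ)) μ :=
    (hF₂.pow_const _).comp_quasiMeasurePreserving (quasiMeasurePreserving_sub_left μ p)
  rw [lintegral_mul_const'' _ hp, lintegral_sub_left_eq_self (fun x => F₂ x ^ (2 : ℝ)), mul_comm]

theorem lintegral_lconvolution_mul_le {F₁ F₂ F₃ : G → ℝ≥0∞} (hF₁ : AEMeasurable F₁ μ)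
    (hF₂ : AEMeasurable F₂ μ) (hF₃ : AEMeasurable F₃ μ) {S₂ S₃ : Set G}
    (hS₂ : MeasurableSet S₂) (hS₃ : MeasurableSet S₃) (hF₂S : support F₂ ⊆ S₂)
    (hF₃S : support F₃ ⊆ S₃) {M : ℝ≥0∞} (hM : ∀ q ∈ support F₁, μ (S₃ ∩ (· - q) ⁻¹' S₂) ≤ M) :
    ∫⁻ p, (∫⁻ q, F₁ q * F₂ (p - q) ∂μ) * F₃ p ∂μ ≤
      M ^ (1 / 2 : ℝ) * (eLpNorm F₁ 2 μ * eLpNorm F₂ 2 μ * eLpNorm F₃ 2 μ) := by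
  set K : Set (G × G) := {z | z.1 ∈ S₃ ∧ z.1 - z.2 ∈ S₂}
  have hK : MeasurableSet K := (measurable_fst hS₃).inter ((measurable_fst.sub measurable_snd) hS₂)
  have hsplit : ∀ p q, F₁ q * F₂ (p - q) * F₃ p =
      F₂ ((p, q).1 - (p, q).2) * F₃ (p, q).1 * (F₁ (p, q).2 * K.indicator 1 (p, q)) := by
    intro p q
    by_cases hpq : (p, q) ∈ K
    · rw [Set.indicator_of_mem hpq, Pi.one_apply, mul_one]
      ring
    · rcases not_and_or.mp hpq with h | h
      · simp [notMem_support.mp (mt (@hF₃S p) h)]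
      · simp [notMem_support.mp (mt (@hF₂S (p - q)) h)]
  have hA : AEMeasurable (fun z : G × G => F₂ (z.1 - z.2) * F₃ z.1) (μ.prod μ) :=
    (hF₂.comp_quasiMeasurePreserving (quasiMeasurePreserving_sub μ μ)).mul
      (hF₃.comp_quasiMeasurePreserving Measure.quasiMeasurePreserving_fst)
  have hB : AEMeasurable (fun z : G × G => F₁ z.2 * K.indicator 1 z) (μ.prod μ) :=
    (hF₁.comp_quasiMeasurePreserving Measure.quasiMeasurePreserving_snd).mul
      (measurable_one.indicator hK).aemeasurable
  have hconv (p : G) : AEMeasurable (fun q => F₁ q * F₂ (p - q)) μ :=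
    hF₁.mul (hF₂.comp_quasiMeasurePreserving (quasiMeasurePreserving_sub_left μ p))
  have hslice : ∀ q ∈ support F₁, μ {p | (p, q) ∈ K} ≤ M := hM
  calc ∫⁻ p, (∫⁻ q, F₁ q * F₂ (p - q) ∂μ) * F₃ p ∂μ
      = ∫⁻ z, (F₂ (z.1 - z.2) * F₃ z.1) * (F₁ z.2 * K.indicator 1 z) ∂(μ.prod μ) := by
        rw [lintegral_prod (fun z : G × G => F₂ (z.1 - z.2) * F₃ z.1 * (F₁ z.2 * K.indicator 1 z))
          (hA.mul hB)]
        simp_rw [← lintegral_mul_const'' _ (hconv _), hsplit]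
    _ ≤ (∫⁻ z, (F₂ (z.1 - z.2) * F₃ z.1) ^ (2 : ℝ) ∂(μ.prod μ)) ^ (1 / 2 : ℝ) *
          (∫⁻ z, (F₁ z.2 * K.indicator 1 z) ^ (2 : ℝ) ∂(μ.prod μ)) ^ (1 / 2 : ℝ) :=
        ENNReal.lintegral_mul_le_Lp_mul_Lq _ Real.HolderConjugate.two_two hA hB
    _ ≤ ((∫⁻ x, F₂ x ^ (2 : ℝ) ∂μ) * ∫⁻ x, F₃ x ^ (2 : ℝ) ∂μ) ^ (1 / 2 : ℝ) *
          (M * ∫⁻ x, F₁ x ^ (2 : ℝ) ∂μ) ^ (1 / 2 : ℝ) := by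
        rw [lintegral_prod_sub_rpow_two hF₂ hF₃]
        gcongr
        exact lintegral_prod_mul_indicator_rpow_two_le hF₁ hK hslice
    _ = M ^ (1 / 2 : ℝ) * (eLpNorm F₁ 2 μ * eLpNorm F₂ 2 μ * eLpNorm F₃ 2 μ) := by
        simp only [eLpNorm_two_eq_lintegral, ENNReal.mul_rpow_of_nonneg _ _ one_half_pos.le]
        ring

end Convolution

theorem MeasureTheory.Measure.count_prod_le_of_fiber {α β γ : Type*} [MeasurableSpace α]
    [MeasurableSingletonClass α] [MeasurableSpace β] [MeasurableSingletonClass β]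
    [MeasurableSpace γ] {ν : Measure γ} [SFinite ν] {T : Set ((α × β) × γ)}
    (hT : MeasurableSet T) (X : Finset α) (S : α → Finset β)
    (hTXS : ∀ z ∈ T, z.1.1 ∈ X ∧ z.1.2 ∈ S z.1.1) {N ℓ : ℝ≥0∞}
    (hS : ∀ x ∈ X, ((S x).card : ℝ≥0∞) ≤ N) (hℓ : ∀ ζ, ν (Prod.mk ζ ⁻¹' T) ≤ ℓ) :
    (Measure.count.prod ν) T ≤ X.card * N * ℓ := by
  classical
  set F : Finset (α × β) := X.biUnion fun x => (S x).image (Prod.mk x)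
  have hF : ∀ ζ ∉ F, ν (Prod.mk ζ ⁻¹' T) = 0 := by
    intro ζ hζ
    rw [measure_eq_zero_iff_ae_notMem]
    refine Filter.Eventually.of_forall fun τ hτ => hζ ?_
    obtain ⟨h₁, h₂⟩ := hTXS _ hτ
    exact Finset.mem_biUnion.mpr ⟨ζ.1, h₁, Finset.mem_image.mpr ⟨ζ.2, h₂, rfl⟩⟩
  have hFcard : (F.card : ℝ≥0∞) ≤ X.card * N := by
    calc (F.card : ℝ≥0∞) ≤ ∑ x ∈ X, ((S x).card : ℝ≥0∞) := by
          exact_mod_cast Finset.card_biUnion_le.trans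
            (Finset.sum_le_sum fun x _ => Finset.card_image_le)
      _ ≤ X.card * N := by
          simpa using Finset.sum_le_card_nsmul X _ N hS
  calc (Measure.count.prod ν) T = ∑ ζ ∈ F, ν (Prod.mk ζ ⁻¹' T) := by
        rw [Measure.prod_apply hT, lintegral_count, tsum_eq_sum hF]
    _ ≤ F.card * ℓ := by simpa using Finset.sum_le_card_nsmul F _ ℓ fun ζ _ => hℓ ζ
    _ ≤ X.card * N * ℓ := by gcongr

theorem Real.volume_closedBall_inter_closedBall_le (a b r s : ℝ) :
    volume (Metric.closedBall a r ∩ Metric.closedBall b s) ≤ ENNReal.ofReal (2 * min r s) := by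
  rcases le_total r s with h | h
  · rw [min_eq_left h, ← Real.volume_closedBall]
    exact measure_mono Set.inter_subset_left
  · rw [min_eq_right h, ← Real.volume_closedBall]
    exact measure_mono Set.inter_subset_right

theorem Int.card_Icc_ceil_floor_le {x y : ℝ} (h : x ≤ y) :
    ((Finset.Icc ⌈x⌉ ⌊y⌋).card : ℝ) ≤ y - x + 1 := by
  rw [Int.card_Icc]
  rcases le_total (⌊y⌋ + 1 - ⌈x⌉) 0 with hneg | hpos
  · rw [Int.toNat_of_nonpos hneg]
    push_cast
    linarith
  · have hcast : (((⌊y⌋ + 1 - ⌈x⌉).toNat : ℤ) : ℝ) = ⌊y⌋ + 1 - ⌈x⌉ := by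
      rw [Int.toNat_of_nonneg hpos]; push_cast; ring
    rw [← Int.cast_natCast, hcast]
    linarith [Int.floor_le y, Int.le_ceil x]

theorem Int.exists_finset_abs_sq_add_sub_le (β D : ℝ) {δ : ℝ} (hδ : 0 ≤ δ) :
    ∃ s : Finset ℤ, (∀ n : ℤ, |((n : ℝ) + β) ^ 2 - D| ≤ δ → n ∈ s) ∧
      (s.card : ℝ) ≤ 2 * (√(2 * δ) + 1) := by
  -- `D - δ` may be negative; then `a = 0` (junk value of `√`), still a lower bound for `|n + β|`.
  set a := √(D - δ)
  set b := √(D + δ)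
  have ha : 0 ≤ a := Real.sqrt_nonneg _
  have hab : a ≤ b := Real.sqrt_le_sqrt (by linarith)
  have hwidth : b - a ≤ √(2 * δ) := by
    rcases lt_or_ge (D + δ) 0 with hneg | hpos
    · have : b = 0 := Real.sqrt_eq_zero'.mpr hneg.le
      linarith [Real.sqrt_nonneg (2 * δ)]
    · refine Real.le_sqrt_of_sq_le ?_
      have hb2 : b ^ 2 = D + δ := Real.sq_sqrt hpos
      have ha2 : D - δ ≤ a ^ 2 := Real.sq_sqrt' ▸ le_max_left _ _
      nlinarith
  refine ⟨Finset.Icc ⌈a - β⌉ ⌊b - β⌋ ∪ Finset.Icc ⌈-b - β⌉ ⌊-a - β⌋, fun n hn => ?_, ?_⟩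
  · rw [abs_le] at hn
    have hlo : a ≤ |(n : ℝ) + β| := by
      rw [← Real.sqrt_sq_eq_abs]; exact Real.sqrt_le_sqrt (by linarith)
    have hhi : |(n : ℝ) + β| ≤ b := by
      rw [← Real.sqrt_sq_eq_abs]; exact Real.sqrt_le_sqrt (by linarith)
    simp only [Finset.mem_union, Finset.mem_Icc, Int.ceil_le, Int.le_floor]
    rcases le_total 0 ((n : ℝ) + β) with hnn | hnp
    · rw [abs_of_nonneg hnn] at hlo hhi
      left; constructor <;> linarith
    · rw [abs_of_nonpos hnp] at hlo hhi
      right; constructor <;> linarith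
  · have h₁ := Int.card_Icc_ceil_floor_le (show a - β ≤ b - β by linarith)
    have h₂ := Int.card_Icc_ceil_floor_le (show -b - β ≤ -a - β by linarith)
    have hunion := Finset.card_union_le (Finset.Icc ⌈a - β⌉ ⌊b - β⌋) (Finset.Icc ⌈-b - β⌉ ⌊-a - β⌋)
    have : ((Finset.Icc ⌈a - β⌉ ⌊b - β⌋ ∪ Finset.Icc ⌈-b - β⌉ ⌊-a - β⌋).card : ℝ) ≤
        (Finset.Icc ⌈a - β⌉ ⌊b - β⌋).card + (Finset.Icc ⌈-b - β⌉ ⌊-a - β⌋).card := by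
      exact_mod_cast hunion
    linarith

theorem Int.exists_finset_abs_quadratic_le {A : ℝ} (hA : A ≠ 0) (B C : ℝ) {L : ℝ} (hL : 0 ≤ L) :
    ∃ s : Finset ℤ, (∀ n : ℤ, |A * n ^ 2 + B * n + C| ≤ L → n ∈ s) ∧
      (s.card : ℝ) ≤ 2 * (√(2 * L / |A|) + 1) := by
  obtain ⟨s, hs, hcard⟩ := Int.exists_finset_abs_sq_add_sub_le (B / (2 * A))
    ((B / (2 * A)) ^ 2 - C / A) (div_nonneg hL (abs_nonneg A))
  refine ⟨s, fun n hn => hs n ?_, by rwa [mul_div_assoc]⟩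
  have hcomplete : A * n ^ 2 + B * n + C =
      A * (((n : ℝ) + B / (2 * A)) ^ 2 - ((B / (2 * A)) ^ 2 - C / A)) := by
    field_simp; ring
  rwa [le_div_iff₀ (abs_pos.mpr hA), mul_comm, ← abs_mul, ← hcomplete]

theorem min_sq_mul_add_le {u v : ℝ} (hu : 0 ≤ u) (hv : 0 ≤ v) :
    min u v ^ 2 * (u + v) ≤ 2 * u ^ 2 * v := by
  rcases le_total u v with h | h
  · rw [min_eq_left h]; nlinarith [sq_nonneg u]
  · rw [min_eq_right h]; nlinarith [mul_le_mul_of_nonneg_left h (mul_nonneg hu hv)]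

theorem min_mul_sqrt_le {u v a x : ℝ} (hu : 0 ≤ u) (hv : 0 ≤ v) (ha : 0 < a)
    (hvx : v ≤ 2 * a * x ^ 4) :
    min u v * √(2 * (u + v) / a) ≤ 3 * u * x ^ 2 := by
  have hm : 0 ≤ min u v := le_min hu hv
  rw [← Real.sqrt_sq hm, ← Real.sqrt_mul (sq_nonneg _),
    ← Real.sqrt_sq (by positivity : 0 ≤ 3 * u * x ^ 2)]
  refine Real.sqrt_le_sqrt ?_
  rw [← mul_div_assoc, div_le_iff₀ ha]
  nlinarith [min_sq_mul_add_le hu hv, mul_le_mul_of_nonneg_left hvx (sq_nonneg u),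
    mul_nonneg (mul_nonneg ha.le (sq_nonneg u)) (pow_nonneg (sq_nonneg x) 2)]

theorem mul_sqrt_add_one_mul_min_le {u v w a x : ℝ} (hu : 0 ≤ u) (hv : 0 ≤ v) (hw : 0 ≤ w)
    (ha : 0 < a) (hx : 0 ≤ x) (hvx : v ≤ 2 * a * x ^ 4) :
    2 * w * (2 * (√(2 * (u + v) / a) + 1)) * (2 * min u v) ≤ 36 * u * w * (1 + x) ^ 2 := by
  have key := min_mul_sqrt_le hu hv ha hvx
  have hmin := min_le_left u v
  have : 2 * (√(2 * (u + v) / a) + 1) * (2 * min u v) ≤ 18 * u * (1 + x) ^ 2 := by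
    nlinarith [Real.sqrt_nonneg (2 * (u + v) / a), sq_nonneg x]
  nlinarith

theorem measurableSet_Dx (k j : ℕ) : MeasurableSet (Dx k j) := by
  have hξ : Measurable fun p : (ℤ × ℤ) × ℝ => |(p.1.1 : ℝ)| :=
    (measurable_of_countable fun ζ : ℤ × ℤ => |(ζ.1 : ℝ)|).comp measurable_fst
  have hτ : Measurable fun p : (ℤ × ℤ) × ℝ => p.2 - omegaZK p.1 :=
    measurable_snd.sub ((measurable_of_countable omegaZK).comp measurable_fst)
  exact (measurableSet_le measurable_const hξ).inter
    ((measurableSet_lt hξ measurable_const).inter (measurableSet_le hτ.abs measurable_const))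

theorem omegaZK_sub_omegaZK_sub (ζ q : ℤ × ℤ) :
    omegaZK ζ - omegaZK (ζ - q) = q.1 * (ζ.2 : ℝ) ^ 2 + 2 * (ζ.1 - q.1) * q.2 * ζ.2 +
      ((ζ.1 : ℝ) ^ 3 - (ζ.1 - q.1) ^ 3 - (ζ.1 - q.1) * q.2 ^ 2) := by
  simp only [omegaZK, Prod.fst_sub, Prod.snd_sub, Int.cast_sub]
  ring

theorem muZ_Dx_inter_preimage_sub_le (k₂ k₃ j₂ j₃ : ℕ) (q : (ℤ × ℤ) × ℝ) (hq : q.1.1 ≠ 0) :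
    muZ (Dx k₃ j₃ ∩ (· - q) ⁻¹' Dx k₂ j₂) ≤
      ENNReal.ofReal (2 * 2 ^ k₂) *
        ENNReal.ofReal (2 * (√(2 * (2 ^ j₂ + 2 ^ j₃) / |(q.1.1 : ℝ)|) + 1)) *
        ENNReal.ofReal (2 * min (2 ^ j₂) (2 ^ j₃)) := by
  have hL : (0 : ℝ) ≤ 2 ^ j₂ + 2 ^ j₃ := by positivity
  choose S hS hScard using fun ξ : ℤ => Int.exists_finset_abs_quadratic_le
    (Int.cast_ne_zero.mpr hq) (2 * (ξ - q.1.1) * q.1.2)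
    ((ξ : ℝ) ^ 3 - (ξ - q.1.1) ^ 3 - (ξ - q.1.1) * q.1.2 ^ 2 - q.2) hL
  set X := Finset.Ioo (q.1.1 - 2 ^ k₂) (q.1.1 + 2 ^ k₂)
  have hXcard : (X.card : ℝ≥0∞) ≤ ENNReal.ofReal (2 * 2 ^ k₂) := by
    rw [← ENNReal.ofReal_natCast]
    refine ENNReal.ofReal_le_ofReal ?_
    rw [Int.card_Ioo]
    have hpow : ((2 ^ k₂ : ℕ) : ℤ) = 2 ^ k₂ := by push_cast; rfl
    have : (q.1.1 + 2 ^ k₂ - (q.1.1 - 2 ^ k₂) - 1).toNat ≤ 2 * 2 ^ k₂ := by omega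
    exact_mod_cast this
  refine (Measure.count_prod_le_of_fiber (ν := volume) ((measurableSet_Dx k₃ j₃).inter
    (measurable_sub_const q (measurableSet_Dx k₂ j₂))) X S ?_ (fun ξ _ => ?_) (fun ζ => ?_)).trans
    (by gcongr)
  · rintro ⟨ζ, τ⟩ ⟨⟨-, -, h₃⟩, ⟨-, hξ, h₂⟩⟩
    simp only [Prod.fst_sub, Prod.snd_sub, zpow_natCast] at hξ h₂ h₃
    refine ⟨?_, hS ζ.1 ζ.2 ?_⟩
    · have hξ' : |ζ.1 - q.1.1| < 2 ^ k₂ := by exact_mod_cast hξ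
      rw [abs_lt] at hξ'
      exact Finset.mem_Ioo.mpr ⟨by linarith, by linarith⟩
    · have := omegaZK_sub_omegaZK_sub ζ q.1
      rw [abs_le] at h₂ h₃ ⊢
      constructor <;> linarith
  · rw [← ENNReal.ofReal_natCast]
    exact ENNReal.ofReal_le_ofReal (hScard ξ)
  · refine (measure_mono fun τ hτ => ?_).trans (Real.volume_closedBall_inter_closedBall_le
      (q.2 + omegaZK (ζ - q.1)) (omegaZK ζ) (2 ^ j₂) (2 ^ j₃))
    obtain ⟨⟨-, -, h₃⟩, ⟨-, -, h₂⟩⟩ := hτ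
    simp only [Prod.fst_sub, Prod.snd_sub, zpow_natCast] at h₂ h₃
    simp only [Set.mem_inter_iff, Metric.mem_closedBall, Real.dist_eq]
    exact ⟨by rwa [sub_add_eq_sub_sub], h₃⟩

theorem muZ_Dx_inter_preimage_sub_le_sq (k₁ k₂ k₃ j₂ j₃ : ℕ) (q : (ℤ × ℤ) × ℝ)
    (hq : (2 : ℝ) ^ ((k₁ : ℤ) - 1) ≤ |(q.1.1 : ℝ)|) :
    muZ (Dx k₃ j₃ ∩ (· - q) ⁻¹' Dx k₂ j₂) ≤
      ENNReal.ofReal ((6 * (2 : ℝ) ^ ((j₂ : ℝ) / 2) * (2 : ℝ) ^ ((k₂ : ℝ) / 2) *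
        (1 + (2 : ℝ) ^ (((j₃ : ℝ) - k₁) / 4))) ^ 2) := by
  have hk₁ : (2 : ℝ) ^ k₁ ≤ 2 * |(q.1.1 : ℝ)| := by
    rw [zpow_sub₀ two_ne_zero, zpow_one, zpow_natCast] at hq
    linarith
  have ha : 0 < |(q.1.1 : ℝ)| := lt_of_lt_of_le (by positivity) hq
  have hsq_half (n : ℕ) : ((2 : ℝ) ^ ((n : ℝ) / 2)) ^ 2 = 2 ^ n := by
    rw [← Real.rpow_natCast, ← Real.rpow_mul zero_le_two, ← Real.rpow_natCast]
    norm_num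
  set x := (2 : ℝ) ^ (((j₃ : ℝ) - k₁) / 4)
  have hx4 : x ^ 4 = 2 ^ j₃ / 2 ^ k₁ := by
    rw [← Real.rpow_natCast, ← Real.rpow_mul zero_le_two, ← Real.rpow_natCast,
      ← Real.rpow_natCast, ← Real.rpow_sub two_pos]
    norm_num
  have hvx : (2 : ℝ) ^ j₃ ≤ 2 * |(q.1.1 : ℝ)| * x ^ 4 := by
    rw [hx4, ← mul_div_assoc, le_div_iff₀ (by positivity)]
    exact mul_le_mul_of_nonneg_left hk₁ (by positivity) |>.trans_eq (by ring)
  refine (muZ_Dx_inter_preimage_sub_le k₂ k₃ j₂ j₃ q (by simpa using ha)).trans ?_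
  rw [← ENNReal.ofReal_mul (by positivity), ← ENNReal.ofReal_mul (by positivity)]
  refine ENNReal.ofReal_le_ofReal ((mul_sqrt_add_one_mul_min_le (by positivity) (by positivity)
    (by positivity) ha (by positivity) hvx).trans_eq ?_)
  rw [mul_pow, mul_pow, mul_pow, hsq_half, hsq_half]
  ring

theorem convZ_eq_lintegral {f₁ f₂ : (ℤ × ℤ) × ℝ → ℝ} (h₁ : AEMeasurable f₁ muZ)
    (h₂ : AEMeasurable f₂ muZ) (p : (ℤ × ℤ) × ℝ) :
    convZ f₁ f₂ p = ∫⁻ q, ENNReal.ofReal (f₁ q) * ENNReal.ofReal (f₂ (p - q)) ∂muZ := by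
  unfold muZ at *
  rw [lintegral_prod (fun q => ENNReal.ofReal (f₁ q) * ENNReal.ofReal (f₂ (p - q)))
    (h₁.ennreal_ofReal.mul (h₂.ennreal_ofReal.comp_quasiMeasurePreserving
    (quasiMeasurePreserving_sub_left _ p))), lintegral_count]
  rfl

/-- Anisotropic bilinear convolution estimate for the periodic Zakharov-Kuznetsov
equation:
`∫ (f₁ * f₂) f₃ ≲ ‖f₁‖_{L²} 2^{j₂/2} 2^{k₂/2} ‖f₂‖_{L²} (1 + 2^{(j₃-k₁)/4}) ‖f₃‖_{L²}`. -/
theorem anisotropic_bilinear_estimate :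
    ∃ C > 0, ∀ (k₁ k₂ k₃ j₁ j₂ j₃ : ℕ) (f₁ f₂ f₃ : (ℤ × ℤ) × ℝ → ℝ),
      (∀ p, 0 ≤ f₁ p) → (∀ p, 0 ≤ f₂ p) → (∀ p, 0 ≤ f₃ p) →
      MemLp f₁ 2 muZ → MemLp f₂ 2 muZ → MemLp f₃ 2 muZ →
      Function.support f₁ ⊆ Dx k₁ j₁ →
      Function.support f₂ ⊆ Dx k₂ j₂ →
      Function.support f₃ ⊆ Dx k₃ j₃ →
      ∫⁻ p, convZ f₁ f₂ p * ENNReal.ofReal (f₃ p) ∂muZ ≤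
        ENNReal.ofReal (C * (2:ℝ) ^ ((j₂ : ℝ)/2) * (2:ℝ) ^ ((k₂ : ℝ)/2) *
            (1 + (2:ℝ) ^ (((j₃ : ℝ) - (k₁ : ℝ))/4))) *
          (eLpNorm f₁ 2 muZ * eLpNorm f₂ 2 muZ * eLpNorm f₃ 2 muZ) := by
  refine ⟨6, by norm_num, fun k₁ k₂ k₃ j₁ j₂ j₃ f₁ f₂ f₃ h₁ h₂ h₃ hm₁ hm₂ hm₃ hs₁ hs₂ hs₃ => ?_⟩
  have hsupp (f : (ℤ × ℤ) × ℝ → ℝ) : support (fun p => ENNReal.ofReal (f p)) ⊆ support f :=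
    support_comp_subset ENNReal.ofReal_zero f
  simp_rw [convZ_eq_lintegral hm₁.aemeasurable hm₂.aemeasurable]
  rw [← eLpNorm_ofReal f₁ (ae_of_all _ h₁), ← eLpNorm_ofReal f₂ (ae_of_all _ h₂),
    ← eLpNorm_ofReal f₃ (ae_of_all _ h₃)]
  have hsqrt (c : ℝ) (hc : 0 ≤ c) : ENNReal.ofReal c = ENNReal.ofReal (c ^ 2) ^ (1 / 2 : ℝ) := by
    rw [ENNReal.ofReal_rpow_of_nonneg (sq_nonneg c) one_half_pos.le, ← Real.sqrt_eq_rpow,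
      Real.sqrt_sq hc]
  rw [hsqrt _ (by positivity)]
  unfold muZ at *
  exact lintegral_lconvolution_mul_le hm₁.aemeasurable.ennreal_ofReal
    hm₂.aemeasurable.ennreal_ofReal hm₃.aemeasurable.ennreal_ofReal (measurableSet_Dx k₂ j₂)
    (measurableSet_Dx k₃ j₃) ((hsupp f₂).trans hs₂) ((hsupp f₃).trans hs₃) fun q hq =>
      muZ_Dx_inter_preimage_sub_le_sq k₁ k₂ k₃ j₂ j₃ q ((hsupp f₁).trans hs₁ hq).1
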